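/- arXiv:1411.4022 — 2 statements merged into one kernel-verified Lean document; each statement's English description precedes it below -/
import Mathlib

section
/- Let m, n ≥ 1. A polynomial f in ℝ[ξ_{ij}, η_{ij} : 1 ≤ i ≤ m, 1 ≤ j ≤ n] belongs to R_n^m if and only if every monomial ∏_{i,j} η_{ij}^{A_{ij}} ξ_{ij}^{B_{ij}} occurring in f with nonzero coefficient satisfies: for every i, if there exists j with A_{ij} > 0 or B_{ij} > 0, then A_{ik} > 0 for all k. Consequently, the set of such monomials forms an ℝ-vector space basis of R_n^m. -/
/-!
On a monomial the condition says: either it involves no variable of row `i`, or it contains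
every `η_{ik}` and hence vanishes on `W_i`; in both cases its values on `W_i` do not depend on
row `i`. Conversely, if a monomial `d` of `f` involves row `i` but not `η_{ik}`, substitute
`η_{ik} := 0` in `f`. The result still contains `d`, and its values are values of `f` on `W_i`,
so as a function it does not depend on row `i`; over an infinite domain this means that none of
its monomials involves row `i`, contradicting `d`.
-/

open MvPolynomial

namespace MvPolynomial

variable {R σ : Type*}

section CommSemiring

variable [CommSemiring R]

theorem linearIndependent_monomial_one_subtype (p : (σ →₀ ℕ) → Prop) :
    LinearIndependent R fun d : {d // p d} => (monomial d.1 (1 : R) : MvPolynomial σ R) :=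
  (basisMonomials σ R).linearIndependent.comp Subtype.val Subtype.val_injective

theorem coe_span_monomial_one (p : (σ →₀ ℕ) → Prop) :
    (Submodule.span R {g : MvPolynomial σ R | ∃ d, p d ∧ g = monomial d 1} : Set _) =
      {f : MvPolynomial σ R | ∀ d ∈ f.support, p d} := by
  have : {g : MvPolynomial σ R | ∃ d, p d ∧ g = monomial d 1} = (monomial · 1) '' {d | p d} := by
    simp only [Set.image, eq_comm, Set.mem_ofPred_eq]
  ext f
  rw [this, ← restrictSupport_eq_span, SetLike.mem_coe, mem_restrictSupport_iff]
  rfl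

variable [DecidableEq σ]

theorem eval_aeval_update_X_zero (P : σ → R) (v : σ) (f : MvPolynomial σ R) :
    eval P (aeval (Function.update X v 0) f) = eval (Function.update P v 0) f := by
  change aeval P (aeval _ f) = aeval _ f
  rw [comp_aeval_apply]
  congr 2 with w
  rcases eq_or_ne w v with rfl | hw
  · simp
  · simp [hw]

theorem aeval_update_X_zero_monomial (v : σ) (d : σ →₀ ℕ) (a : R) :
    aeval (Function.update X v 0) (monomial d a) = if d v = 0 then monomial d a else 0 := by
  rw [aeval_monomial, monomial_eq, algebraMap_eq]
  split_ifs with hv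
  · congr 1
    refine Finsupp.prod_congr fun w hw => ?_
    rw [Function.update_of_ne (by rintro rfl; exact Finsupp.mem_support_iff.mp hw hv)]
  · rw [Finsupp.prod, Finset.prod_eq_zero (Finsupp.mem_support_iff.mpr hv) (by simp [hv]),
      mul_zero]

theorem coeff_aeval_update_X_zero (v : σ) (f : MvPolynomial σ R) (d : σ →₀ ℕ) :
    coeff d (aeval (Function.update X v 0) f) = if d v = 0 then coeff d f else 0 := by
  induction f using MvPolynomial.induction_on' with
  | monomial u a =>
    rw [aeval_update_X_zero_monomial]
    rcases eq_or_ne u d with rfl | hud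
    · split_ifs <;> simp
    · split_ifs <;> simp [coeff_monomial, hud]
  | add p q hp hq =>
    rw [map_add, coeff_add, hp, hq]
    split_ifs <;> simp

end CommSemiring

section Blocks

variable {κ : Type*} [Fintype κ] (s : Set σ) (η : κ → σ)

theorem eval_eq_of_forall_mem_support [CommSemiring R] [NoZeroDivisors R] [Nontrivial R]
    {f : MvPolynomial σ R} (hf : ∀ d ∈ f.support, (∃ w ∈ s, 0 < d w) → ∀ k, 0 < d (η k))
    {P Q : σ → R} (hP : ∏ k, P (η k) = 0) (hQ : ∏ k, Q (η k) = 0)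
    (hPQ : ∀ w ∉ s, P w = Q w) :
    eval P f = eval Q f := by
  rw [eval_eq, eval_eq]
  refine Finset.sum_congr rfl fun d hd => ?_
  by_cases hds : ∃ w ∈ s, 0 < d w
  · have vanish (x : σ → R) (hx : ∏ k, x (η k) = 0) : ∏ w ∈ d.support, x w ^ d w = 0 := by
      obtain ⟨k, -, hk⟩ := Finset.prod_eq_zero_iff.mp hx
      have hdk := (hf d hd hds k).ne'
      exact Finset.prod_eq_zero (Finsupp.mem_support_iff.mpr hdk) (by rw [hk, zero_pow hdk])
    rw [vanish P hP, vanish Q hQ]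
  · push Not at hds
    refine congrArg _ (Finset.prod_congr rfl fun w hw => ?_)
    have hws : w ∉ s := fun h => Finsupp.mem_support_iff.mp hw (Nat.le_zero.mp (hds w h))
    rw [hPQ w hws]

theorem pos_of_mem_support_of_forall_eval_eq [CommRing R] [IsDomain R] [Infinite R]
    {f : MvPolynomial σ R}
    (hf : ∀ P Q : σ → R, ∏ k, P (η k) = 0 → ∏ k, Q (η k) = 0 → (∀ w ∉ s, P w = Q w) →
      eval P f = eval Q f)
    {d : σ →₀ ℕ} (hd : d ∈ f.support) (hds : ∃ w ∈ s, 0 < d w) (k : κ) :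
    0 < d (η k) := by
  classical
  obtain ⟨w, hws, hdw⟩ := hds
  by_contra! hdk
  set g : MvPolynomial σ R := aeval (Function.update X (η k) 0) f
  have hg_coeff : coeff d g ≠ 0 := by
    rw [coeff_aeval_update_X_zero, if_pos (Nat.le_zero.mp hdk)]
    exact mem_support_iff.mp hd
  have hg_fixed : aeval (Function.update X w 0) g = g := MvPolynomial.funext fun P => by
    simp only [g, eval_aeval_update_X_zero]
    refine hf _ _ (Finset.prod_eq_zero (Finset.mem_univ k) (Function.update_self ..))
      (Finset.prod_eq_zero (Finset.mem_univ k) (Function.update_self ..)) fun u hu => ?_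
    have huw : u ≠ w := ne_of_mem_of_not_mem hws hu |>.symm
    rcases eq_or_ne u (η k) with rfl | huk
    · simp
    · simp [Function.update_of_ne, huk, huw]
  have := coeff_aeval_update_X_zero w g d
  rw [hg_fixed, if_neg hdw.ne'] at this
  exact hg_coeff this

theorem forall_eval_eq_iff [CommRing R] [IsDomain R] [Infinite R] (f : MvPolynomial σ R) :
    (∀ P Q : σ → R, ∏ k, P (η k) = 0 → ∏ k, Q (η k) = 0 → (∀ w ∉ s, P w = Q w) →
      eval P f = eval Q f) ↔
      ∀ d ∈ f.support, (∃ w ∈ s, 0 < d w) → ∀ k, 0 < d (η k) :=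
  ⟨fun hf _ hd hds k => pos_of_mem_support_of_forall_eval_eq s η hf hd hds k,
    fun hf _ _ hP hQ hPQ => eval_eq_of_forall_mem_support s η hf hP hQ hPQ⟩

end Blocks

end MvPolynomial

section Rows

variable {R ι κ : Type*} [CommRing R]

def rowVars (i : ι) : Set ((ι × κ) ⊕ (ι × κ)) := {w | w.elim Prod.fst Prod.fst = i}

theorem forall_ne_row_iff {α : Type*} (P Q : (ι × κ) ⊕ (ι × κ) → α) (i : ι) :
    (∀ i' j, i' ≠ i → P (.inl (i', j)) = Q (.inl (i', j)) ∧ P (.inr (i', j)) = Q (.inr (i', j))) ↔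
      ∀ w ∉ rowVars i, P w = Q w := by
  constructor
  · rintro h (⟨i', j⟩ | ⟨i', j⟩) hw
    exacts [(h i' j hw).1, (h i' j hw).2]
  · exact fun h i' j hi => ⟨h _ hi, h _ hi⟩

theorem exists_pos_row_iff (d : (ι × κ) ⊕ (ι × κ) →₀ ℕ) (i : ι) :
    (∃ j, 0 < d (.inr (i, j)) ∨ 0 < d (.inl (i, j))) ↔ ∃ w ∈ rowVars i, 0 < d w := by
  constructor
  · rintro ⟨j, h | h⟩
    exacts [⟨_, rfl, h⟩, ⟨_, rfl, h⟩]
  · rintro ⟨⟨i', j⟩ | ⟨i', j⟩, rfl, h⟩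
    exacts [⟨j, .inr h⟩, ⟨j, .inl h⟩]

/-- Membership in `R_n^m`. -/
def IsRowInvariant [Fintype κ] (f : MvPolynomial ((ι × κ) ⊕ (ι × κ)) R) : Prop :=
  ∀ i : ι, ∀ P Q : ((ι × κ) ⊕ (ι × κ)) → R,
    (∏ k : κ, P (.inr (i, k))) = 0 → (∏ k : κ, Q (.inr (i, k))) = 0 →
    (∀ i' j, i' ≠ i → P (.inl (i', j)) = Q (.inl (i', j)) ∧ P (.inr (i', j)) = Q (.inr (i', j))) →
    eval P f = eval Q f

def IsAdmissibleExponent (d : (ι × κ) ⊕ (ι × κ) →₀ ℕ) : Prop :=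
  ∀ i, (∃ j, 0 < d (.inr (i, j)) ∨ 0 < d (.inl (i, j))) → ∀ k, 0 < d (.inr (i, k))

theorem isRowInvariant_iff [Fintype κ] [IsDomain R] [Infinite R]
    (f : MvPolynomial ((ι × κ) ⊕ (ι × κ)) R) :
    IsRowInvariant f ↔ ∀ d ∈ f.support, IsAdmissibleExponent d := by
  simp only [IsRowInvariant, IsAdmissibleExponent, forall_ne_row_iff, exists_pos_row_iff,
    forall_eval_eq_iff]
  exact ⟨fun h d hd i => h i d hd, fun h i d hd => h d hd i⟩

end Rows

theorem stmt1_general (m n : ℕ) :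
    (∀ f : MvPolynomial ((Fin m × Fin n) ⊕ (Fin m × Fin n)) ℝ,
      (∀ i : Fin m, ∀ P Q : ((Fin m × Fin n) ⊕ (Fin m × Fin n)) → ℝ,
        (∏ k : Fin n, P (Sum.inr (i, k))) = 0 →
        (∏ k : Fin n, Q (Sum.inr (i, k))) = 0 →
        (∀ i' : Fin m, ∀ j : Fin n, i' ≠ i →
          P (Sum.inl (i', j)) = Q (Sum.inl (i', j)) ∧
          P (Sum.inr (i', j)) = Q (Sum.inr (i', j))) →
        eval P f = eval Q f)
      ↔ (∀ d ∈ f.support, ∀ i : Fin m,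
          (∃ j : Fin n, 0 < d (Sum.inr (i, j)) ∨ 0 < d (Sum.inl (i, j))) →
          ∀ k : Fin n, 0 < d (Sum.inr (i, k)))) ∧
    LinearIndependent ℝ
      (fun d : {d : ((Fin m × Fin n) ⊕ (Fin m × Fin n)) →₀ ℕ //
          ∀ i : Fin m,
            (∃ j : Fin n, 0 < d (Sum.inr (i, j)) ∨ 0 < d (Sum.inl (i, j))) →
            ∀ k : Fin n, 0 < d (Sum.inr (i, k))} =>
        (monomial d.1 (1 : ℝ) :
          MvPolynomial ((Fin m × Fin n) ⊕ (Fin m × Fin n)) ℝ)) ∧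
    (Submodule.span ℝ
        {g : MvPolynomial ((Fin m × Fin n) ⊕ (Fin m × Fin n)) ℝ |
          ∃ d : ((Fin m × Fin n) ⊕ (Fin m × Fin n)) →₀ ℕ,
            (∀ i : Fin m,
              (∃ j : Fin n, 0 < d (Sum.inr (i, j)) ∨ 0 < d (Sum.inl (i, j))) →
              ∀ k : Fin n, 0 < d (Sum.inr (i, k))) ∧
            g = monomial d (1 : ℝ)} : Set _) =
      {f : MvPolynomial ((Fin m × Fin n) ⊕ (Fin m × Fin n)) ℝ |
        ∀ i : Fin m, ∀ P Q : ((Fin m × Fin n) ⊕ (Fin m × Fin n)) → ℝ,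
          (∏ k : Fin n, P (Sum.inr (i, k))) = 0 →
          (∏ k : Fin n, Q (Sum.inr (i, k))) = 0 →
          (∀ i' : Fin m, ∀ j : Fin n, i' ≠ i →
            P (Sum.inl (i', j)) = Q (Sum.inl (i', j)) ∧
            P (Sum.inr (i', j)) = Q (Sum.inr (i', j))) →
          eval P f = eval Q f} := by
  refine ⟨isRowInvariant_iff, linearIndependent_monomial_one_subtype _, ?_⟩
  rw [coe_span_monomial_one]
  ext f
  exact (isRowInvariant_iff f).symm

/-- A polynomial `f ∈ ℝ[ξ_{ij}, η_{ij}]` belongs to `R_n^m` iff every monomial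
`∏ η_{ij}^{A_{ij}} ξ_{ij}^{B_{ij}}` occurring in `f` with nonzero coefficient satisfies:
for every `i`, if some `A_{ij} > 0` or `B_{ij} > 0`, then `A_{ik} > 0` for all `k`.
Consequently these monomials form an ℝ-basis of `R_n^m`: they are linearly independent and
their span is exactly `R_n^m`.  Here `Sum.inl (i, j)` is the variable `ξ_{ij}` and
`Sum.inr (i, j)` is the variable `η_{ij}`. -/
theorem stmt1 (m n : ℕ) (hm : 1 ≤ m) (hn : 1 ≤ n) :
    (∀ f : MvPolynomial ((Fin m × Fin n) ⊕ (Fin m × Fin n)) ℝ,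
      (∀ i : Fin m, ∀ P Q : ((Fin m × Fin n) ⊕ (Fin m × Fin n)) → ℝ,
        (∏ k : Fin n, P (Sum.inr (i, k))) = 0 →
        (∏ k : Fin n, Q (Sum.inr (i, k))) = 0 →
        (∀ i' : Fin m, ∀ j : Fin n, i' ≠ i →
          P (Sum.inl (i', j)) = Q (Sum.inl (i', j)) ∧
          P (Sum.inr (i', j)) = Q (Sum.inr (i', j))) →
        eval P f = eval Q f)
      ↔ (∀ d ∈ f.support, ∀ i : Fin m,
          (∃ j : Fin n, 0 < d (Sum.inr (i, j)) ∨ 0 < d (Sum.inl (i, j))) →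
          ∀ k : Fin n, 0 < d (Sum.inr (i, k)))) ∧
    LinearIndependent ℝ
      (fun d : {d : ((Fin m × Fin n) ⊕ (Fin m × Fin n)) →₀ ℕ //
          ∀ i : Fin m,
            (∃ j : Fin n, 0 < d (Sum.inr (i, j)) ∨ 0 < d (Sum.inl (i, j))) →
            ∀ k : Fin n, 0 < d (Sum.inr (i, k))} =>
        (monomial d.1 (1 : ℝ) :
          MvPolynomial ((Fin m × Fin n) ⊕ (Fin m × Fin n)) ℝ)) ∧
    (Submodule.span ℝ
        {g : MvPolynomial ((Fin m × Fin n) ⊕ (Fin m × Fin n)) ℝ |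
          ∃ d : ((Fin m × Fin n) ⊕ (Fin m × Fin n)) →₀ ℕ,
            (∀ i : Fin m,
              (∃ j : Fin n, 0 < d (Sum.inr (i, j)) ∨ 0 < d (Sum.inl (i, j))) →
              ∀ k : Fin n, 0 < d (Sum.inr (i, k))) ∧
            g = monomial d (1 : ℝ)} : Set _) =
      {f : MvPolynomial ((Fin m × Fin n) ⊕ (Fin m × Fin n)) ℝ |
        ∀ i : Fin m, ∀ P Q : ((Fin m × Fin n) ⊕ (Fin m × Fin n)) → ℝ,
          (∏ k : Fin n, P (Sum.inr (i, k))) = 0 →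
          (∏ k : Fin n, Q (Sum.inr (i, k))) = 0 →
          (∀ i' : Fin m, ∀ j : Fin n, i' ≠ i →
            P (Sum.inl (i', j)) = Q (Sum.inl (i', j)) ∧
            P (Sum.inr (i', j)) = Q (Sum.inr (i', j))) →
          eval P f = eval Q f} :=
  stmt1_general m n
end

section
/- Let n ≥ 1. For every X in the free abelian group ℤ[J(n)], the function ρ(X) is a generalized rank invariant, and the map X ↦ ρ(X) is a bijection from ℤ[J(n)] onto the set of generalized rank invariants. -/
open scoped Classical

/-- `J(n) = {(x, y) ∈ ℤ^n × ℤ^n : x ≤ y componentwise}`. -/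
def Jn (n : ℕ) := {xy : (Fin n → ℤ) × (Fin n → ℤ) // ∀ j, xy.1 j ≤ xy.2 j}

/-- The generalized rank invariant associated to an element `X` of the free abelian group
`ℤ[J(n)]`: `ρ(X)(u, v) = Σ_{(x,y)} X(x,y) · [x ≤ u ∧ u ≤ v ∧ v ≤ y]`. -/
noncomputable def rho (n : ℕ) (X : Jn n →₀ ℤ) (u v : Fin n → ℤ) : ℤ :=
  X.sum (fun xy c => c *
    (if (∀ j, xy.1.1 j ≤ u j) ∧ (∀ j, u j ≤ v j) ∧ (∀ j, v j ≤ xy.1.2 j) then 1 else 0))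

/-!
Order `J(n)` by containment of intervals. For `u ≤ v`, `ρ(X)(u, v)` is then the sum of `X` over
the intervals containing `[u, v]`, i.e. `ρ(X)` is the expansion of `X` in the indicators of the
principal lower sets `Iic p`. In any poset these indicators are linearly independent (evaluate at a
maximal element of the support) and span every function supported on a finite lower set (peel off
a maximal element of that set). A generalized rank invariant bounded by `u₀, v₀` is supported on
the intervals inside `[u₀ ⊓ v₀, v₀]`, a finite lower set.
-/

open Set

section IndicatorIic

variable {β R : Type*} [PartialOrder β] [Ring R]

theorem linearIndependent_indicator_Iic :
    LinearIndependent R fun p : β => (Iic p).indicator (1 : β → R) := by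
  rw [linearIndependent_iff]
  intro l hl
  by_contra hne
  obtain ⟨p, hp⟩ := Finset.exists_maximal (Finsupp.support_nonempty_iff.mpr hne)
  have hlp :
      Finsupp.linearCombination R (fun p : β => (Iic p).indicator (1 : β → R)) l p = l p := by
    rw [Finsupp.linearCombination_apply, Finsupp.sum, Finset.sum_apply,
      Finset.sum_eq_single_of_mem p hp.1]
    · simp
    · intro q hq hqp
      have hpq : ¬p ≤ q := fun hpq => hqp (hp.eq_of_le hq hpq).symm
      simp [hpq]
  exact Finsupp.mem_support_iff.mp hp.1 (by rw [← hlp, hl, Pi.zero_apply])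

theorem mem_span_indicator_Iic {s : Set β} (hfin : s.Finite) (hs : IsLowerSet s) {f : β → R}
    (hf : Function.support f ⊆ s) :
    f ∈ Submodule.span R (range fun p : β => (Iic p).indicator (1 : β → R)) := by
  lift s to Finset β using hfin
  induction s using Finset.strongInduction generalizing f with
  | H s ih =>
    rcases s.eq_empty_or_nonempty with rfl | hne
    · have hf0 : f = 0 := Function.support_eq_empty_iff.mp (by simpa using hf)
      exact hf0 ▸ Submodule.zero_mem _
    obtain ⟨p, hp⟩ := Finset.exists_maximal hne
    have hsp : IsLowerSet (↑(s.erase p) : Set β) := by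
      rw [Finset.coe_erase]
      exact hs.erase fun q hq hpq => (hp.eq_of_le hq hpq).symm
    have hf' : Function.support (f - f p • (Iic p).indicator 1) ⊆ ↑(s.erase p) := by
      intro q hq
      have hqs : q ∈ s := by
        by_contra hqs
        have hqp : ¬q ≤ p := fun hqp => hqs (hs hqp hp.1)
        simp [Function.notMem_support.mp fun h => hqs (hf h), hqp] at hq
      refine Finset.mem_erase.mpr ⟨fun hqp => ?_, hqs⟩
      subst hqp
      simp at hq
    have hrest := ih _ (Finset.erase_ssubset hp.1) hsp hf'
    simpa using Submodule.add_mem _ hrest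
      (Submodule.smul_mem _ (f p) (Submodule.subset_span ⟨p, rfl⟩))

end IndicatorIic

namespace Jn

variable {n : ℕ}

noncomputable instance : PartialOrder (Jn n) :=
  PartialOrder.lift (fun p => (OrderDual.toDual p.1.1, p.1.2)) fun _ _ h => Subtype.ext h

theorem le_iff {p q : Jn n} : p ≤ q ↔ q.1.1 ≤ p.1.1 ∧ p.1.2 ≤ q.1.2 := Iff.rfl

theorem fst_le_snd (p : Jn n) : p.1.1 ≤ p.1.2 := p.2

theorem finite_Iic (b : Jn n) : (Iic b).Finite := by
  refine (((finite_Icc b.1.1 b.1.2).prod (finite_Icc b.1.1 b.1.2)).preimage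
    Subtype.val_injective.injOn).subset fun p hp => ?_
  obtain ⟨hb, hp⟩ := le_iff.mp hp
  exact ⟨⟨hb, (fst_le_snd p).trans hp⟩, ⟨hb.trans (fst_le_snd p), hp⟩⟩

end Jn

theorem exists_mem_support_of_rho_ne_zero {n : ℕ} {X : Jn n →₀ ℤ} {u v : Fin n → ℤ}
    (h : rho n X u v ≠ 0) : ∃ p ∈ X.support, p.1.1 ≤ u ∧ u ≤ v ∧ v ≤ p.1.2 := by
  obtain ⟨p, hp, hne⟩ := Finset.exists_ne_zero_of_sum_ne_zero h
  exact ⟨p, hp, of_not_not fun hc => hne (by simp only [Pi.le_def] at hc; simp [hc])⟩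

theorem rho_eq_zero_of_not_le {n : ℕ} (X : Jn n →₀ ℤ) {u v : Fin n → ℤ}
    (h : ¬u ≤ v) : rho n X u v = 0 := by
  by_contra hne
  obtain ⟨-, -, -, huv, -⟩ := exists_mem_support_of_rho_ne_zero hne
  exact h huv

theorem exists_rho_eq_zero_outside_box {n : ℕ} (X : Jn n →₀ ℤ) :
    ∃ u₀ v₀ : Fin n → ℤ, ∀ u v, ¬(u₀ ≤ u ∧ v ≤ v₀) → rho n X u v = 0 := by
  obtain ⟨u₀, hu₀⟩ := (X.support.image fun p => p.1.1).bddBelow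
  obtain ⟨v₀, hv₀⟩ := (X.support.image fun p => p.1.2).bddAbove
  refine ⟨u₀, v₀, fun u v huv => by_contra fun h => huv ?_⟩
  obtain ⟨p, hp, hpu, -, hvp⟩ := exists_mem_support_of_rho_ne_zero h
  exact ⟨(hu₀ (Finset.mem_image_of_mem _ hp)).trans hpu,
    hvp.trans (hv₀ (Finset.mem_image_of_mem _ hp))⟩

theorem linearCombination_indicator_Iic_eq_rho (n : ℕ) (X : Jn n →₀ ℤ) (p : Jn n) :
    Finsupp.linearCombination ℤ (fun q : Jn n => (Iic q).indicator 1) X p =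
      rho n X p.1.1 p.1.2 := by
  rw [Finsupp.linearCombination_apply, rho, Finsupp.sum, Finsupp.sum]
  simp only [Finset.sum_apply]
  refine Finset.sum_congr rfl fun q _ => ?_
  simp only [Pi.smul_apply, smul_eq_mul, Set.indicator_apply, mem_Iic, Jn.le_iff, Pi.le_def]
  simp [p.2]

theorem rho_injective (n : ℕ) : Function.Injective (rho n) := fun X Y hXY =>
  linearIndependent_indicator_Iic <| funext fun p => by
    simp only [linearCombination_indicator_Iic_eq_rho, hXY]

theorem exists_rho_eq {n : ℕ} {r : (Fin n → ℤ) → (Fin n → ℤ) → ℤ}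
    (hr : ∀ u v, ¬u ≤ v → r u v = 0) {u₀ v₀ : Fin n → ℤ}
    (hbox : ∀ u v, ¬(u₀ ≤ u ∧ v ≤ v₀) → r u v = 0) : ∃ X, rho n X = r := by
  let b : Jn n := ⟨(u₀ ⊓ v₀, v₀), (inf_le_right : u₀ ⊓ v₀ ≤ v₀)⟩
  have hsupp : Function.support (fun p : Jn n => r p.1.1 p.1.2) ⊆ Iic b := fun p hp =>
    of_not_not fun hpb => hp <| hbox _ _ fun h =>
      hpb (Jn.le_iff.mpr ⟨inf_le_left.trans h.1, h.2⟩)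
  obtain ⟨X, hX⟩ := Finsupp.mem_span_range_iff_exists_finsupp.mp
    (mem_span_indicator_Iic (Jn.finite_Iic b) (isLowerSet_Iic b) hsupp)
  rw [← Finsupp.linearCombination_apply] at hX
  refine ⟨X, funext₂ fun u v => ?_⟩
  by_cases h : u ≤ v
  · exact (linearCombination_indicator_Iic_eq_rho n X ⟨(u, v), h⟩).symm.trans
      (congrFun hX ⟨(u, v), h⟩)
  · rw [hr u v h, rho_eq_zero_of_not_le X h]

theorem stmt15_general (n : ℕ) :
    Set.BijOn (fun X : Jn n →₀ ℤ => rho n X) Set.univ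
      {r : (Fin n → ℤ) → (Fin n → ℤ) → ℤ |
        (∀ u v, ¬(∀ j, u j ≤ v j) → r u v = 0) ∧
        ∃ u₀ v₀ : Fin n → ℤ, ∀ u v,
          ¬((∀ j, u₀ j ≤ u j) ∧ (∀ j, v j ≤ v₀ j)) → r u v = 0} := by
  refine ⟨fun X _ => ⟨fun u v => rho_eq_zero_of_not_le X, exists_rho_eq_zero_outside_box X⟩,
    (rho_injective n).injOn, ?_⟩
  rintro r ⟨hr, u₀, v₀, hbox⟩
  obtain ⟨X, rfl⟩ := exists_rho_eq hr hbox
  exact ⟨X, trivial, rfl⟩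

/-- The map `X ↦ ρ(X)` is a bijection from `ℤ[J(n)]` onto the set of
generalized rank invariants: for every `X`, `ρ(X)` is a generalized rank invariant, and
the map is injective and surjective onto that set. -/
theorem stmt15 (n : ℕ) (hn : 1 ≤ n) :
    Set.BijOn (fun X : Jn n →₀ ℤ => rho n X) Set.univ
      {r : (Fin n → ℤ) → (Fin n → ℤ) → ℤ |
        (∀ u v, ¬(∀ j, u j ≤ v j) → r u v = 0) ∧
        ∃ u₀ v₀ : Fin n → ℤ, ∀ u v,
          ¬((∀ j, u₀ j ≤ u j) ∧ (∀ j, v j ≤ v₀ j)) → r u v = 0} :=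
  stmt15_general n
end
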